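/- If G is a dead-ending game such that every Left option of G is a left end having a Right option equal to the zero game, and every Right option of G is a right end having a Left option equal to the zero game, then G ≡ 0 modulo the dead-ending universe E. -/

import Mathlib

/-! `SetTheory.PGame` has been removed from Mathlib; its old definitions are reproduced here. -/

universe u

namespace SetTheory

inductive PGame : Type (u + 1)
  | mk : ∀ α β : Type u, (α → PGame) → (β → PGame) → PGame

namespace PGame

def LeftMoves : PGame → Type u
  | mk l _ _ _ => l

def RightMoves : PGame → Type u
  | mk _ r _ _ => r

def moveLeft : ∀ g : PGame, LeftMoves g → PGame
  | mk _l _ L _ => L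

def moveRight : ∀ g : PGame, RightMoves g → PGame
  | mk _ _r _ R => R

inductive IsOption : PGame → PGame → Prop
  | moveLeft {x : PGame} (i : x.LeftMoves) : IsOption (x.moveLeft i) x
  | moveRight {x : PGame} (i : x.RightMoves) : IsOption (x.moveRight i) x

instance : Zero PGame :=
  ⟨⟨PEmpty, PEmpty, PEmpty.elim, PEmpty.elim⟩⟩

def neg : PGame → PGame
  | ⟨l, r, L, R⟩ => ⟨r, l, fun i => neg (R i), fun i => neg (L i)⟩

instance : Neg PGame :=
  ⟨neg⟩

noncomputable instance : Add PGame.{u} :=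
  ⟨fun x y => by
    induction x generalizing y with | mk xl xr _ _ IHxl IHxr => _
    induction y with | mk yl yr yL yR IHyl IHyr => _
    have y := mk yl yr yL yR
    refine ⟨xl ⊕ yl, xr ⊕ yr, Sum.rec ?_ ?_, Sum.rec ?_ ?_⟩
    · exact fun i => IHxl i y
    · exact IHyl
    · exact fun i => IHxr i y
    · exact IHyr⟩

end PGame

end SetTheory

open SetTheory

namespace Misere

/-- `F` is a follower of `G`: reachable from `G` by a (possibly empty) sequence of moves. -/
def Follower (F G : PGame) : Prop := Relation.ReflTransGen PGame.IsOption F G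

def IsLeftEnd (G : PGame) : Prop := IsEmpty G.LeftMoves
def IsRightEnd (G : PGame) : Prop := IsEmpty G.RightMoves

/-- A dead left end: every follower (including itself) is a left end. -/
def DeadLeftEnd (G : PGame) : Prop := ∀ F, Follower F G → IsLeftEnd F
def DeadRightEnd (G : PGame) : Prop := ∀ F, Follower F G → IsRightEnd F
def DeadEnd (G : PGame) : Prop := DeadLeftEnd G ∨ DeadRightEnd G

/-- A game is dead-ending if every end follower is a dead end. -/
def DeadEnding (G : PGame) : Prop :=
  ∀ F, Follower F G → (IsLeftEnd F → DeadLeftEnd F) ∧ (IsRightEnd F → DeadRightEnd F)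

/-- The universe of dead-ending games. -/
def E : Set PGame := {G | DeadEnding G}

/-- `(misereWins G).1` : Left, moving first, wins `G` under misère play;
    `(misereWins G).2` : Right, moving first, wins `G` under misère play. -/
def misereWins : PGame → Prop × Prop
  | PGame.mk l r L R =>
      (IsEmpty l ∨ ∃ i, ¬ (misereWins (L i)).2,
       IsEmpty r ∨ ∃ j, ¬ (misereWins (R j)).1)

def LeftWinsGF (G : PGame) : Prop := (misereWins G).1
def RightWinsGF (G : PGame) : Prop := (misereWins G).2

inductive MOutcome : Type
  | L | N | P | R
deriving DecidableEq

/-- Partial order on misère outcomes: `R` minimal, `L` maximal, `N` and `P` incomparable. -/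
def MOutcome.le : MOutcome → MOutcome → Prop
  | .R, _ => True
  | _, .L => True
  | a, b => a = b

instance : LE MOutcome := ⟨MOutcome.le⟩

/-- The misère outcome of a game. -/
noncomputable def outcome (G : PGame) : MOutcome := by
  classical
  exact if LeftWinsGF G then (if RightWinsGF G then .N else .L)
        else (if RightWinsGF G then .R else .P)

/-- `G ≡ H (mod U)`. -/
def equivMod (U : Set PGame) (G H : PGame) : Prop :=
  ∀ X ∈ U, outcome (G + X) = outcome (H + X)

/-- `G ≧ H (mod U)`. -/
def geMod (U : Set PGame) (G H : PGame) : Prop :=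
  ∀ X ∈ U, outcome (H + X) ≤ outcome (G + X)

/-- `LeftChain G n`: there is a sequence of `n` consecutive Left moves from `G`
ending at the zero position. -/
inductive LeftChain : PGame → ℕ → Prop
  | zero (G : PGame) : IsLeftEnd G → IsRightEnd G → LeftChain G 0
  | succ (G : PGame) (i : G.LeftMoves) (n : ℕ) :
      LeftChain (G.moveLeft i) n → LeftChain G (n + 1)

inductive RightChain : PGame → ℕ → Prop
  | zero (G : PGame) : IsLeftEnd G → IsRightEnd G → RightChain G 0
  | succ (G : PGame) (j : G.RightMoves) (n : ℕ) :
      RightChain (G.moveRight j) n → RightChain G (n + 1)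

/-- Left-length: minimum number of consecutive Left moves needed to reach zero. -/
noncomputable def leftLength (G : PGame) : ℕ := sInf {n | LeftChain G n}

/-- Right-length: minimum number of consecutive Right moves needed to reach zero. -/
noncomputable def rightLength (G : PGame) : ℕ := sInf {n | RightChain G n}

/-- Normal-play canonical form of a nonnegative integer. -/
def natGame : ℕ → PGame
  | 0 => 0
  | n + 1 => PGame.mk PUnit PEmpty (fun _ => natGame n) PEmpty.elim

/-- Normal-play canonical form of an integer (negatives are conjugates). -/
def intGame (n : ℤ) : PGame :=
  if 0 ≤ n then natGame n.toNat else -natGame (-n).toNat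

/-- Normal-play canonical form of the dyadic rational `m / 2 ^ j`. -/
def dyadicGame : ℤ → ℕ → PGame
  | m, 0 => intGame m
  | m, j + 1 =>
      if m % 2 = 0 then dyadicGame (m / 2) j
      else PGame.mk PUnit PUnit (fun _ => dyadicGame ((m - 1) / 2) j)
            (fun _ => dyadicGame ((m + 1) / 2) j)

/-- The closure of dead ends: finite disjunctive sums of dead ends. -/
def DeadEndClosure : Set PGame :=
  {G | ∃ l : List PGame, (∀ x ∈ l, DeadEnd x) ∧ G = l.sum}

end Misere

/-! Induct on the dead-ending game `X`, showing that `G + X` and `X` have the same winners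
moving first. If Left has no move in `X`, then `X` is a dead left end and Left moves to some
`G^L + X`: a sum of dead left ends in which Right has a move, and every Right move leaves Left
without a move. Conversely, a Left move to `G^L + X` is answered by Right moving `G^L` to `0`,
which gives Left the first move in `X` again; moves inside `X` are covered by induction. -/

namespace Misere

open SetTheory PGame

lemma leftWinsGF_iff (W : PGame) :
    LeftWinsGF W ↔ IsLeftEnd W ∨ ∃ i, ¬ RightWinsGF (W.moveLeft i) := by
  cases W; rfl

lemma rightWinsGF_iff (W : PGame) :
    RightWinsGF W ↔ IsRightEnd W ∨ ∃ j, ¬ LeftWinsGF (W.moveRight j) := by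
  cases W; rfl

lemma leftWinsGF_add_iff (x y : PGame) :
    LeftWinsGF (x + y) ↔ IsLeftEnd x ∧ IsLeftEnd y ∨
      (∃ i, ¬ RightWinsGF (x.moveLeft i + y)) ∨ ∃ i, ¬ RightWinsGF (x + y.moveLeft i) := by
  cases x; cases y
  change (IsEmpty (_ ⊕ _) ∨ ∃ i : _ ⊕ _, _) ↔ _
  rw [isEmpty_sum, Sum.exists]
  rfl

lemma rightWinsGF_add_iff (x y : PGame) :
    RightWinsGF (x + y) ↔ IsRightEnd x ∧ IsRightEnd y ∨
      (∃ j, ¬ LeftWinsGF (x.moveRight j + y)) ∨ ∃ j, ¬ LeftWinsGF (x + y.moveRight j) := by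
  cases x; cases y
  change (IsEmpty (_ ⊕ _) ∨ ∃ j : _ ⊕ _, _) ↔ _
  rw [isEmpty_sum, Sum.exists]
  rfl

lemma DeadEnding.of_isOption {X Y : PGame} (hX : DeadEnding X) (h : IsOption Y X) :
    DeadEnding Y := fun F hF => hX F (hF.tail h)

lemma DeadEnding.deadLeftEnd {X : PGame} (hX : DeadEnding X) (h : IsLeftEnd X) :
    DeadLeftEnd X := (hX X .refl).1 h

lemma DeadEnding.deadRightEnd {X : PGame} (hX : DeadEnding X) (h : IsRightEnd X) :
    DeadRightEnd X := (hX X .refl).2 h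

lemma DeadLeftEnd.isLeftEnd {X : PGame} (h : DeadLeftEnd X) : IsLeftEnd X :=
  h X .refl

lemma DeadRightEnd.isRightEnd {X : PGame} (h : DeadRightEnd X) : IsRightEnd X :=
  h X .refl

lemma DeadLeftEnd.moveRight {X : PGame} (h : DeadLeftEnd X) (j : X.RightMoves) :
    DeadLeftEnd (X.moveRight j) := fun F hF => h F (hF.tail (.moveRight j))

lemma DeadRightEnd.moveLeft {X : PGame} (h : DeadRightEnd X) (i : X.LeftMoves) :
    DeadRightEnd (X.moveLeft i) := fun F hF => h F (hF.tail (.moveLeft i))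

lemma leftWinsGF_of_isLeftEnd {X : PGame} (h : IsLeftEnd X) : LeftWinsGF X :=
  (leftWinsGF_iff X).2 (.inl h)

lemma rightWinsGF_of_isRightEnd {X : PGame} (h : IsRightEnd X) : RightWinsGF X :=
  (rightWinsGF_iff X).2 (.inl h)

lemma isLeftEnd_add {x y : PGame} (hx : IsLeftEnd x) (hy : IsLeftEnd y) : IsLeftEnd (x + y) := by
  cases x; cases y; exact isEmpty_sum.2 ⟨hx, hy⟩

lemma isRightEnd_add {x y : PGame} (hx : IsRightEnd x) (hy : IsRightEnd y) :
    IsRightEnd (x + y) := by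
  cases x; cases y; exact isEmpty_sum.2 ⟨hx, hy⟩

lemma isLeftEnd_zero : IsLeftEnd 0 := inferInstanceAs (IsEmpty PEmpty)

lemma isRightEnd_zero : IsRightEnd 0 := inferInstanceAs (IsEmpty PEmpty)

lemma DeadLeftEnd.not_rightWinsGF_add {Y Z : PGame} (hY : DeadLeftEnd Y) (hZ : DeadLeftEnd Z)
    (j : Y.RightMoves) : ¬ RightWinsGF (Y + Z) := by
  rw [rightWinsGF_add_iff]
  rintro (⟨hY', -⟩ | ⟨k, hk⟩ | ⟨k, hk⟩)
  · exact hY'.false j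
  · exact hk (leftWinsGF_of_isLeftEnd (isLeftEnd_add (hY.moveRight k).isLeftEnd hZ.isLeftEnd))
  · exact hk (leftWinsGF_of_isLeftEnd (isLeftEnd_add hY.isLeftEnd (hZ.moveRight k).isLeftEnd))

lemma DeadRightEnd.not_leftWinsGF_add {Y Z : PGame} (hY : DeadRightEnd Y) (hZ : DeadRightEnd Z)
    (i : Y.LeftMoves) : ¬ LeftWinsGF (Y + Z) := by
  rw [leftWinsGF_add_iff]
  rintro (⟨hY', -⟩ | ⟨k, hk⟩ | ⟨k, hk⟩)
  · exact hY'.false i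
  · exact hk (rightWinsGF_of_isRightEnd (isRightEnd_add (hY.moveLeft k).isRightEnd hZ.isRightEnd))
  · exact hk (rightWinsGF_of_isRightEnd (isRightEnd_add hY.isRightEnd (hZ.moveLeft k).isRightEnd))

lemma winsGF_add_iff_of_isLeftEnd_of_isRightEnd {Y : PGame} (hl : IsLeftEnd Y)
    (hr : IsRightEnd Y) (X : PGame) :
    (LeftWinsGF (Y + X) ↔ LeftWinsGF X) ∧ (RightWinsGF (Y + X) ↔ RightWinsGF X) := by
  have : IsEmpty Y.LeftMoves := hl
  have : IsEmpty Y.RightMoves := hr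
  induction X with
  | mk xl xr xL xR ihl ihr =>
    rw [leftWinsGF_add_iff, rightWinsGF_add_iff, leftWinsGF_iff, rightWinsGF_iff]
    simp only [and_iff_right hl, and_iff_right hr, IsEmpty.exists_iff, false_or]
    exact ⟨or_congr_right (exists_congr fun i => (ihl i).2.not),
      or_congr_right (exists_congr fun j => (ihr j).1.not)⟩

lemma rightWinsGF_add_of_not_leftWinsGF {Y X : PGame} (j : Y.RightMoves)
    (hl : IsLeftEnd (Y.moveRight j)) (hr : IsRightEnd (Y.moveRight j)) (hX : ¬ LeftWinsGF X) :
    RightWinsGF (Y + X) :=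
  (rightWinsGF_add_iff Y X).2 <| .inr <| .inl
    ⟨j, fun h => hX ((winsGF_add_iff_of_isLeftEnd_of_isRightEnd hl hr X).1.1 h)⟩

lemma leftWinsGF_add_of_not_rightWinsGF {Y X : PGame} (i : Y.LeftMoves)
    (hl : IsLeftEnd (Y.moveLeft i)) (hr : IsRightEnd (Y.moveLeft i)) (hX : ¬ RightWinsGF X) :
    LeftWinsGF (Y + X) :=
  (leftWinsGF_add_iff Y X).2 <| .inr <| .inl
    ⟨i, fun h => hX ((winsGF_add_iff_of_isLeftEnd_of_isRightEnd hl hr X).2.1 h)⟩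

section

variable {G : PGame}

lemma leftWinsGF_add_iff_of_rightWinsGF_add_iff {X : PGame}
    (hL : ∀ i, DeadLeftEnd (G.moveLeft i) ∧ ∃ j, IsLeftEnd ((G.moveLeft i).moveRight j) ∧
      IsRightEnd ((G.moveLeft i).moveRight j))
    (hX : DeadEnding X) (ih : ∀ i, RightWinsGF (G + X.moveLeft i) ↔ RightWinsGF (X.moveLeft i)) :
    LeftWinsGF (G + X) ↔ LeftWinsGF X := by
  rw [leftWinsGF_add_iff]
  constructor
  · rintro (⟨-, hX'⟩ | ⟨i, hi⟩ | ⟨i, hi⟩)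
    · exact leftWinsGF_of_isLeftEnd hX'
    · obtain ⟨-, j, hl, hr⟩ := hL i
      by_contra hXlose
      exact hi (rightWinsGF_add_of_not_leftWinsGF j hl hr hXlose)
    · exact (leftWinsGF_iff X).2 (.inr ⟨i, (ih i).not.1 hi⟩)
  · rw [leftWinsGF_iff]
    rintro (hX' | ⟨i, hi⟩)
    · by_cases hG : IsLeftEnd G
      · exact .inl ⟨hG, hX'⟩
      · obtain ⟨i⟩ := not_isEmpty_iff.1 hG
        obtain ⟨hdead, j, -⟩ := hL i
        exact .inr (.inl ⟨i, hdead.not_rightWinsGF_add (hX.deadLeftEnd hX') j⟩)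
    · exact .inr (.inr ⟨i, (ih i).not.2 hi⟩)

lemma rightWinsGF_add_iff_of_leftWinsGF_add_iff {X : PGame}
    (hR : ∀ j, DeadRightEnd (G.moveRight j) ∧ ∃ i, IsLeftEnd ((G.moveRight j).moveLeft i) ∧
      IsRightEnd ((G.moveRight j).moveLeft i))
    (hX : DeadEnding X) (ih : ∀ j, LeftWinsGF (G + X.moveRight j) ↔ LeftWinsGF (X.moveRight j)) :
    RightWinsGF (G + X) ↔ RightWinsGF X := by
  rw [rightWinsGF_add_iff]
  constructor
  · rintro (⟨-, hX'⟩ | ⟨j, hj⟩ | ⟨j, hj⟩)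
    · exact rightWinsGF_of_isRightEnd hX'
    · obtain ⟨-, i, hl, hr⟩ := hR j
      by_contra hXlose
      exact hj (leftWinsGF_add_of_not_rightWinsGF i hl hr hXlose)
    · exact (rightWinsGF_iff X).2 (.inr ⟨j, (ih j).not.1 hj⟩)
  · rw [rightWinsGF_iff]
    rintro (hX' | ⟨j, hj⟩)
    · by_cases hG : IsRightEnd G
      · exact .inl ⟨hG, hX'⟩
      · obtain ⟨j⟩ := not_isEmpty_iff.1 hG
        obtain ⟨hdead, i, -⟩ := hR j
        exact .inr (.inl ⟨j, hdead.not_leftWinsGF_add (hX.deadRightEnd hX') i⟩)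
    · exact .inr (.inr ⟨j, (ih j).not.2 hj⟩)

theorem winsGF_add_iff_of_deadEnding
    (hL : ∀ i, DeadLeftEnd (G.moveLeft i) ∧ ∃ j, IsLeftEnd ((G.moveLeft i).moveRight j) ∧
      IsRightEnd ((G.moveLeft i).moveRight j))
    (hR : ∀ j, DeadRightEnd (G.moveRight j) ∧ ∃ i, IsLeftEnd ((G.moveRight j).moveLeft i) ∧
      IsRightEnd ((G.moveRight j).moveLeft i))
    (X : PGame) (hX : DeadEnding X) :
    (LeftWinsGF (G + X) ↔ LeftWinsGF X) ∧ (RightWinsGF (G + X) ↔ RightWinsGF X) := by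
  induction X with
  | mk xl xr xL xR ihl ihr =>
    exact ⟨leftWinsGF_add_iff_of_rightWinsGF_add_iff hL hX
        fun i => (ihl i (hX.of_isOption (.moveLeft i))).2,
      rightWinsGF_add_iff_of_leftWinsGF_add_iff hR hX
        fun j => (ihr j (hX.of_isOption (.moveRight j))).1⟩

end

lemma outcome_eq_of_iff {A B : PGame} (hl : LeftWinsGF A ↔ LeftWinsGF B)
    (hr : RightWinsGF A ↔ RightWinsGF B) : outcome A = outcome B := by
  unfold outcome
  split_ifs <;> tauto

end Misere

open Misere SetTheory PGame

/-- if G is dead-ending, every Left option of G is a left end with a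
Right option to zero, and every Right option is a right end with a Left option to
zero, then G ≡ 0 (mod E). -/
theorem stmt19 (G : PGame) (hG : DeadEnding G)
    (hL : ∀ i : G.LeftMoves, IsLeftEnd (G.moveLeft i) ∧
      ∃ j : (G.moveLeft i).RightMoves,
        IsLeftEnd ((G.moveLeft i).moveRight j) ∧ IsRightEnd ((G.moveLeft i).moveRight j))
    (hR : ∀ j : G.RightMoves, IsRightEnd (G.moveRight j) ∧
      ∃ i : (G.moveRight j).LeftMoves,
        IsLeftEnd ((G.moveRight j).moveLeft i) ∧ IsRightEnd ((G.moveRight j).moveLeft i)) :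
    equivMod E G 0 := by
  intro X hX
  have hGX := winsGF_add_iff_of_deadEnding
    (fun i => ⟨(hG.of_isOption (.moveLeft i)).deadLeftEnd (hL i).1, (hL i).2⟩)
    (fun j => ⟨(hG.of_isOption (.moveRight j)).deadRightEnd (hR j).1, (hR j).2⟩) X hX
  have h0X := winsGF_add_iff_of_isLeftEnd_of_isRightEnd isLeftEnd_zero isRightEnd_zero X
  exact outcome_eq_of_iff (hGX.1.trans h0X.1.symm) (hGX.2.trans h0X.2.symm)
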